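/- Let E : M_d(ℂ) → M_d(ℂ) be completely positive and trace-preserving. Then ‖𝓔_n‖² ≤ (d−1)(1 − u(E)). -/

import Mathlib

open Matrix Kronecker ComplexOrder MeasureTheory

/-- `d×d` complex matrices. -/
abbrev Mat (d : ℕ) := Matrix (Fin d) (Fin d) ℂ

/-- Matrices on `ℂ^d ⊗ ℂ^d`. -/
abbrev Mat2 (d : ℕ) := Matrix (Fin d × Fin d) (Fin d × Fin d) ℂ

noncomputable instance matMeasurableSpace {m n : Type*} : MeasurableSpace (Matrix m n ℂ) :=
  borel _

variable {d : ℕ}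

/-- Liouville representation of a linear map in the basis `A`:
`𝓔_{kl} = Tr((A k)† E (A l))`. -/
noncomputable def Liou (A : Fin (d ^ 2) → Mat d) (E : Mat d →ₗ[ℂ] Mat d) :
    Matrix (Fin (d ^ 2)) (Fin (d ^ 2)) ℂ :=
  Matrix.of fun k l => Matrix.trace ((A k)ᴴ * E (A l))

/-- The unitarity `u(E) = Tr(𝓔ᵤ† 𝓔ᵤ)/(d²-1)`, where `𝓔ᵤ` is the lower-right
`(d²-1)×(d²-1)` (unital) block of the Liouville representation. -/
noncomputable def unitarity (A : Fin (d ^ 2) → Mat d) (E : Mat d →ₗ[ℂ] Mat d) : ℝ :=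
  (∑ k ∈ Finset.univ.filter (fun k : Fin (d ^ 2) => (k : ℕ) ≠ 0),
    ∑ l ∈ Finset.univ.filter (fun l : Fin (d ^ 2) => (l : ℕ) ≠ 0),
      ‖Liou A E k l‖ ^ 2) / ((d : ℝ) ^ 2 - 1)

/-- `‖𝓔ₙ‖²`: squared Frobenius norm of the nonunital (bottom-left) column block. -/
noncomputable def nSq (A : Fin (d ^ 2) → Mat d) (E : Mat d →ₗ[ℂ] Mat d) : ℝ :=
  ∑ k ∈ Finset.univ.filter (fun k : Fin (d ^ 2) => (k : ℕ) ≠ 0),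
    ∑ l ∈ Finset.univ.filter (fun l : Fin (d ^ 2) => (l : ℕ) = 0),
      ‖Liou A E k l‖ ^ 2

/-- `‖𝓔_sdl‖²`: squared Frobenius norm of the state-dependent-leakage (top-right) row block. -/
noncomputable def sdlSq (A : Fin (d ^ 2) → Mat d) (E : Mat d →ₗ[ℂ] Mat d) : ℝ :=
  ∑ k ∈ Finset.univ.filter (fun k : Fin (d ^ 2) => (k : ℕ) = 0),
    ∑ l ∈ Finset.univ.filter (fun l : Fin (d ^ 2) => (l : ℕ) ≠ 0),
      ‖Liou A E k l‖ ^ 2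

/-- The average survival rate `S(E) = Tr(E(𝟙))/d` (real part). -/
noncomputable def survival (d : ℕ) (E : Mat d →ₗ[ℂ] Mat d) : ℝ :=
  (Matrix.trace (E 1)).re / d

/-- The swap operator `S` on `ℂ^d ⊗ ℂ^d`, `S(x⊗y) = y⊗x`. -/
def swap (d : ℕ) : Mat2 d :=
  Matrix.of fun p q => if p.1 = q.2 ∧ p.2 = q.1 then 1 else 0

/-- The Choi matrix `∑_{j,k} E(|j⟩⟨k|) ⊗ |j⟩⟨k|`. -/
noncomputable def choi (E : Mat d →ₗ[ℂ] Mat d) : Mat2 d :=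
  Matrix.of fun p q => E (Matrix.single p.2 q.2 1) p.1 q.1

/-- Complete positivity: the Choi matrix is positive semidefinite. -/
def IsCP (E : Mat d →ₗ[ℂ] Mat d) : Prop := (choi E).PosSemidef

/-- Trace preserving. -/
def IsTP (E : Mat d →ₗ[ℂ] Mat d) : Prop := ∀ X : Mat d, (E X).trace = X.trace

/-- Trace nonincreasing on positive semidefinite inputs (with the complex order). -/
def IsTNI (E : Mat d →ₗ[ℂ] Mat d) : Prop :=
  ∀ ρ : Mat d, ρ.PosSemidef → (E ρ).trace ≤ ρ.trace

/-- Hermiticity preserving. -/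
def IsHermPreserving (E : Mat d →ₗ[ℂ] Mat d) : Prop := ∀ X : Mat d, E Xᴴ = (E X)ᴴ

/-- The induced map `E ⊗ F` on `M_{d²}(ℂ) = M_d(ℂ) ⊗ M_d(ℂ)`; it is the unique
linear map satisfying `(E ⊗ F)(A ⊗ₖ B) = E(A) ⊗ₖ F(B)`. -/
noncomputable def tensorMap (E F : Mat d →ₗ[ℂ] Mat d) : Mat2 d →ₗ[ℂ] Mat2 d where
  toFun X := Matrix.of fun p q =>
    ∑ i : Fin d, ∑ j : Fin d, ∑ k : Fin d, ∑ l : Fin d,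
      X (i, k) (j, l) *
        (E (Matrix.single i j 1) p.1 q.1 * F (Matrix.single k l 1) p.2 q.2)
  map_add' X Y := by
    ext p q
    simp [Matrix.add_apply, add_mul, Finset.sum_add_distrib]
  map_smul' c X := by
    ext p q
    simp [Matrix.smul_apply, Finset.mul_sum, smul_eq_mul, mul_assoc]

/-- Conjugation `ρ ↦ U ρ Uᴴ` as a linear map. -/
noncomputable def conjMap (U : Mat d) : Mat d →ₗ[ℂ] Mat d :=
  LinearMap.mulLeft ℂ U ∘ₗ LinearMap.mulRight ℂ Uᴴ

/-- `B₁ = 𝟙_{d²}/d`. -/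
noncomputable def B1 (d : ℕ) : Mat2 d := ((d : ℂ))⁻¹ • 1

/-- `B₂ = (S - 𝟙_{d²}/d)/√(d²-1)`. -/
noncomputable def B2 (d : ℕ) : Mat2 d :=
  ((Real.sqrt ((d : ℝ) ^ 2 - 1) : ℂ))⁻¹ • (swap d - ((d : ℂ))⁻¹ • 1)

/-- The 2×2 matrix `M(E)` with entries `M_{ij} = Tr[Bᵢ† (E⊗E)(Bⱼ)]`. -/
noncomputable def Mmat (E : Mat d →ₗ[ℂ] Mat d) : Matrix (Fin 2) (Fin 2) ℂ :=
  Matrix.of fun i j =>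
    Matrix.trace ((![B1 d, B2 d] i)ᴴ * tensorMap E E (![B1 d, B2 d] j))

/-- Auxiliary: interleave noise `E` and unitary conjugations along a list. -/
noncomputable def seqAux (E : Mat d →ₗ[ℂ] Mat d) : List (Mat d) → Mat d → Mat d
  | [], σ => σ
  | U :: rest, σ => seqAux E rest (U * E σ * Uᴴ)

/-- The output state `(𝓤_{j_m} ∘ E ∘ 𝓤_{j_{m-1}} ∘ E ∘ ⋯ ∘ E ∘ 𝓤_{j_1})(ρ)` for the
sequence of unitaries given by the list (head applied first). -/
noncomputable def seqState (E : Mat d →ₗ[ℂ] Mat d) : List (Mat d) → Mat d → Mat d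
  | [], ρ => ρ
  | U :: rest, ρ => seqAux E rest (U * ρ * Uᴴ)

/-!
For trace-preserving `E` the first row of the Liouville matrix is `(1, 0, …, 0)` and its first
column is `Tr(A_k† E(𝟙)) / √d`, so by Parseval `‖𝓔ₙ‖² = ‖E(𝟙)‖² / d − 1` and
`(d² − 1) u(E) = ‖𝓔‖² − 1 − ‖𝓔ₙ‖²`; moreover `‖𝓔‖` is the Frobenius norm of the Choi matrix `J`.
The claim thus reduces to `‖J‖² + ‖E(𝟙)‖² ≤ d² + d`. For a Kraus decomposition
`E = ∑ₐ Lₐ (·) Lₐ†` with `∑ₐ Lₐ† Lₐ = 𝟙`, this is the sum over all pairs `(a, b)` of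
`‖(𝟙 − S)(Lₐ ⊗ L_b)(𝟙 + S)‖² ≥ 0`, where `S` is the swap on `ℂ^d ⊗ ℂ^d`.
-/

attribute [local instance] Matrix.frobeniusNormedAddCommGroup Matrix.frobeniusNormedSpace

namespace Matrix

variable {m n : Type*} [Fintype m] [Fintype n]

lemma frobenius_norm_sq (X : Matrix m n ℂ) : ‖X‖ ^ 2 = ∑ i, ∑ j, ‖X i j‖ ^ 2 := by
  rw [frobenius_norm_def, ← Real.sqrt_eq_rpow, Real.sq_sqrt (by positivity)]
  simp only [Real.rpow_two]

lemma trace_conjTranspose_mul_eq_sum (X Y : Matrix m n ℂ) :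
    trace (Xᴴ * Y) = ∑ i, ∑ j, star (X i j) * Y i j := by
  simp only [trace, diag, mul_apply, conjTranspose_apply]
  exact Finset.sum_comm

lemma trace_conjTranspose_mul_self (X : Matrix m n ℂ) : trace (Xᴴ * X) = (‖X‖ ^ 2 : ℝ) := by
  simp [trace_conjTranspose_mul_eq_sum, frobenius_norm_sq, Complex.conj_mul']

lemma re_trace_conjTranspose_mul_self (X : Matrix m n ℂ) : (trace (Xᴴ * X)).re = ‖X‖ ^ 2 := by
  rw [trace_conjTranspose_mul_self, Complex.ofReal_re]

lemma star_trace_conjTranspose_mul (X Y : Matrix m n ℂ) :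
    star (trace (Xᴴ * Y)) = trace (Yᴴ * X) := by
  rw [← trace_conjTranspose, conjTranspose_mul, conjTranspose_conjTranspose]

lemma frobenius_norm_conjTranspose_mul_self (V : Matrix m n ℂ) : ‖Vᴴ * V‖ = ‖V * Vᴴ‖ := by
  rw [← sq_eq_sq₀ (norm_nonneg _) (norm_nonneg _), ← re_trace_conjTranspose_mul_self,
    ← re_trace_conjTranspose_mul_self]
  simp only [conjTranspose_mul, conjTranspose_conjTranspose]
  rw [← Matrix.mul_assoc, trace_mul_cycle]
  simp only [Matrix.mul_assoc]

section Orthonormal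

variable {ι : Type*} [Fintype ι] [DecidableEq ι] {A : ι → Matrix m n ℂ}

theorem trace_conjTranspose_mul_eq_sum_of_orthonormal
    (horth : ∀ k l, trace ((A k)ᴴ * A l) = if k = l then 1 else 0)
    (hspan : Submodule.span ℂ (Set.range A) = ⊤) (X Y : Matrix m n ℂ) :
    trace (Xᴴ * Y) = ∑ k, trace (Xᴴ * A k) * trace ((A k)ᴴ * Y) := by
  let φ : Matrix m n ℂ →ₗ[ℂ] ℂ := traceLinearMap n ℂ ℂ ∘ₗ mulLeftLinearMap n ℂ Xᴴ
  let ψ : Matrix m n ℂ →ₗ[ℂ] ℂ :=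
    ∑ k, trace (Xᴴ * A k) • (traceLinearMap n ℂ ℂ ∘ₗ mulLeftLinearMap n ℂ (A k)ᴴ)
  have : φ = ψ := by
    refine LinearMap.ext_on hspan ?_
    rintro _ ⟨l, rfl⟩
    simp [φ, ψ, horth]
  simpa [φ, ψ, mul_comm] using LinearMap.congr_fun this Y

theorem sum_norm_trace_sq_of_orthonormal
    (horth : ∀ k l, trace ((A k)ᴴ * A l) = if k = l then 1 else 0)
    (hspan : Submodule.span ℂ (Set.range A) = ⊤) (X : Matrix m n ℂ) :
    ∑ k, ‖trace ((A k)ᴴ * X)‖ ^ 2 = ‖X‖ ^ 2 := by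
  rw [← re_trace_conjTranspose_mul_self,
    trace_conjTranspose_mul_eq_sum_of_orthonormal horth hspan, Complex.re_sum]
  refine Finset.sum_congr rfl fun k _ => ?_
  rw [← star_trace_conjTranspose_mul (A k) X, Complex.star_def, Complex.conj_mul']
  norm_cast

variable [DecidableEq m] [DecidableEq n]

lemma apply_eq_trace_conjTranspose_mul (φ : Matrix m n ℂ →ₗ[ℂ] ℂ) (Y : Matrix m n ℂ) :
    φ Y = trace ((of fun i j => star (φ (single i j 1)))ᴴ * Y) := by
  refine LinearMap.congr_fun (f := φ)
    (g := traceLinearMap n ℂ ℂ ∘ₗ mulLeftLinearMap n ℂ (of fun i j => star (φ (single i j 1)))ᴴ)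
    (ext_linearMap ℂ fun i j => LinearMap.ext_ring ?_) Y
  simp [trace_conjTranspose_mul_eq_sum, single_apply, ite_and]

theorem sum_norm_sq_apply_of_orthonormal
    (horth : ∀ k l, trace ((A k)ᴴ * A l) = if k = l then 1 else 0)
    (hspan : Submodule.span ℂ (Set.range A) = ⊤) (φ : Matrix m n ℂ →ₗ[ℂ] ℂ) :
    ∑ k, ‖φ (A k)‖ ^ 2 = ∑ i, ∑ j, ‖φ (single i j 1)‖ ^ 2 := by
  set F : Matrix m n ℂ := of fun i j => star (φ (single i j 1))
  have hφ : ∀ Y, ‖φ Y‖ = ‖trace (Yᴴ * F)‖ := fun Y => by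
    rw [apply_eq_trace_conjTranspose_mul φ, ← star_trace_conjTranspose_mul, norm_star]
  simp only [hφ, sum_norm_trace_sq_of_orthonormal horth hspan, frobenius_norm_sq, F, of_apply,
    norm_star]

end Orthonormal

end Matrix

theorem norm_liou_sq_eq_norm_choi_sq {A : Fin (d ^ 2) → Mat d}
    (horth : ∀ k l : Fin (d ^ 2), trace ((A k)ᴴ * A l) = if k = l then 1 else 0)
    (hspan : Submodule.span ℂ (Set.range A) = ⊤) (E : Mat d →ₗ[ℂ] Mat d) :
    ‖Liou A E‖ ^ 2 = ‖choi E‖ ^ 2 :=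
  calc ‖Liou A E‖ ^ 2 = ∑ l, ∑ k, ‖trace ((A k)ᴴ * E (A l))‖ ^ 2 := by
        rw [frobenius_norm_sq, Finset.sum_comm]; rfl
    _ = ∑ i, ∑ j, ∑ l, ‖(entryLinearMap ℂ ℂ i j ∘ₗ E) (A l)‖ ^ 2 := by
        simp only [sum_norm_trace_sq_of_orthonormal horth hspan, frobenius_norm_sq]
        rw [Finset.sum_comm]
        exact Finset.sum_congr rfl fun i _ => Finset.sum_comm
    _ = ∑ i, ∑ p, ∑ j, ∑ q, ‖E (single p q 1) i j‖ ^ 2 := by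
        simp only [sum_norm_sq_apply_of_orthonormal horth hspan]
        simp only [LinearMap.comp_apply, entryLinearMap_apply]
        exact Finset.sum_congr rfl fun i _ => Finset.sum_comm
    _ = ‖choi E‖ ^ 2 := by
        simp only [frobenius_norm_sq, Fintype.sum_prod_type]; rfl

lemma swap_mul_apply (M : Mat2 d) (p q : Fin d × Fin d) : (swap d * M) p q = M p.swap q := by
  rw [mul_apply, Finset.sum_eq_single p.swap]
  · simp [_root_.swap]
  · rintro r - hr
    simp only [_root_.swap, of_apply]
    rw [if_neg (by rintro ⟨h1, h2⟩; exact hr (Prod.ext h2.symm h1.symm)), zero_mul]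
  · simp

lemma mul_swap_apply (M : Mat2 d) (p q : Fin d × Fin d) : (M * swap d) p q = M p q.swap := by
  rw [mul_apply, Finset.sum_eq_single q.swap]
  · simp [_root_.swap]
  · rintro r - hr
    simp only [_root_.swap, of_apply]
    rw [if_neg (by rintro ⟨h1, h2⟩; exact hr (Prod.ext h1 h2)), mul_zero]
  · simp

lemma conjTranspose_swap : (swap d)ᴴ = swap d := by
  ext p q
  have : (q.1 = p.2 ∧ q.2 = p.1) ↔ (p.1 = q.2 ∧ p.2 = q.1) := by tauto
  simp only [conjTranspose_apply, _root_.swap, of_apply, this]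
  split_ifs <;> simp

lemma swap_mul_swap : swap d * swap d = 1 := by
  ext p q
  rw [swap_mul_apply]
  have : (p.2 = q.2 ∧ p.1 = q.1) ↔ p = q := by rw [Prod.ext_iff]; tauto
  simp only [_root_.swap, of_apply, one_apply, Prod.fst_swap, Prod.snd_swap, this]

lemma swap_mul_kronecker_mul_swap (X Y : Mat d) : swap d * (X ⊗ₖ Y) * swap d = Y ⊗ₖ X := by
  ext p q
  rw [mul_swap_apply, swap_mul_apply]
  simp [mul_comm]

lemma trace_swap_mul_kronecker (X Y : Mat d) : trace (swap d * (X ⊗ₖ Y)) = trace (X * Y) := by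
  simp only [trace, diag, swap_mul_apply]
  simp only [kroneckerMap_apply, mul_apply, Fintype.sum_prod_type]
  rw [Finset.sum_comm]
  simp

lemma trace_conjTranspose_mul_self_of_involutive {ι : Type*} [Fintype ι] [DecidableEq ι]
    {S : Matrix ι ι ℂ} (hSH : Sᴴ = S) (hSS : S * S = 1) (C : Matrix ι ι ℂ) :
    let W := (1 - S) * C * (1 + S)
    trace (Wᴴ * W) = 4 * (trace (Cᴴ * C) + trace (Cᴴ * C * S)
      - trace (Cᴴ * S * C) - trace (Cᴴ * S * C * S)) := by
  have hminus : (1 - S) * (1 - S) = 2 • (1 - S) := by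
    simp only [sub_mul, mul_sub, one_mul, mul_one, hSS]; abel
  have hplus : (1 + S) * (1 + S) = 2 • (1 + S) := by
    simp only [add_mul, mul_add, one_mul, mul_one, hSS]; abel
  calc _ = trace ((1 + S) * (Cᴴ * ((1 - S) * (1 - S)) * C * (1 + S))) := by
        simp only [conjTranspose_mul, conjTranspose_add, conjTranspose_sub, conjTranspose_one, hSH,
          Matrix.mul_assoc]
    _ = trace (Cᴴ * ((1 - S) * (1 - S)) * C * ((1 + S) * (1 + S))) := by
        rw [trace_mul_comm]; simp only [Matrix.mul_assoc]
    _ = 4 * trace (Cᴴ * (1 - S) * C * (1 + S)) := by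
        rw [hminus, hplus]
        simp only [Matrix.mul_smul, Matrix.smul_mul, trace_smul, smul_smul, Matrix.mul_assoc]
        norm_num
    _ = _ := by
        rw [show Cᴴ * (1 - S) * C * (1 + S) = Cᴴ * C + Cᴴ * C * S - Cᴴ * S * C - Cᴴ * S * C * S by
          noncomm_ring]
        simp only [trace_add, trace_sub]

lemma re_trace_add_norm_trace_sq_le (X Y : Mat d) :
    (trace (X * Xᴴ * (Y * Yᴴ))).re + ‖trace (Xᴴ * Y)‖ ^ 2
      ≤ ‖X‖ ^ 2 * ‖Y‖ ^ 2 + (trace (Xᴴ * X * (Yᴴ * Y))).re := by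
  have hprod : trace ((X ⊗ₖ Y)ᴴ * (X ⊗ₖ Y)) = trace (Xᴴ * X) * trace (Yᴴ * Y) := by
    rw [conjTranspose_kronecker, ← mul_kronecker_mul, trace_kronecker]
  have hright : trace ((X ⊗ₖ Y)ᴴ * (X ⊗ₖ Y) * swap d) = trace (Xᴴ * X * (Yᴴ * Y)) := by
    rw [trace_mul_comm, conjTranspose_kronecker, ← mul_kronecker_mul, trace_swap_mul_kronecker]
  have hleft : trace ((X ⊗ₖ Y)ᴴ * swap d * (X ⊗ₖ Y)) = trace (X * Xᴴ * (Y * Yᴴ)) := by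
    rw [Matrix.mul_assoc, trace_mul_comm, Matrix.mul_assoc, conjTranspose_kronecker,
      ← mul_kronecker_mul, trace_swap_mul_kronecker]
  have hexchange : trace ((X ⊗ₖ Y)ᴴ * swap d * (X ⊗ₖ Y) * swap d) = ‖trace (Xᴴ * Y)‖ ^ 2 := by
    rw [Matrix.mul_assoc _ (swap d), Matrix.mul_assoc, swap_mul_kronecker_mul_swap,
      conjTranspose_kronecker, ← mul_kronecker_mul, trace_kronecker,
      ← star_trace_conjTranspose_mul X Y, Complex.star_def, Complex.mul_conj']
  have hW := re_trace_conjTranspose_mul_self ((1 - swap d) * (X ⊗ₖ Y) * (1 + swap d))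
  rw [trace_conjTranspose_mul_self_of_involutive conjTranspose_swap swap_mul_swap, hprod, hright,
    hleft, hexchange, trace_conjTranspose_mul_self X, trace_conjTranspose_mul_self Y] at hW
  simp only [Complex.mul_re, Complex.sub_re, Complex.add_re, ← Complex.ofReal_pow,
    Complex.ofReal_re, Complex.ofReal_im] at hW
  norm_num at hW
  nlinarith [sq_nonneg ‖(1 - swap d) * (X ⊗ₖ Y) * (1 + swap d)‖]

lemma conjMap_apply (U X : Mat d) : conjMap U X = U * X * Uᴴ := by
  simp [conjMap, Matrix.mul_assoc]

theorem IsCP.exists_kraus {E : Mat d →ₗ[ℂ] Mat d} (hCP : IsCP E) :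
    ∃ L : Fin d × Fin d → Mat d, E = ∑ a, conjMap (L a) := by
  obtain ⟨B, hB⟩ : ∃ B : Mat2 d, choi E = star B * B := by
    open scoped MatrixOrder in exact CStarAlgebra.nonneg_iff_eq_star_mul_self.mp hCP.nonneg
  refine ⟨fun a => of fun i p => star (B a (i, p)),
    ext_linearMap ℂ fun p q => LinearMap.ext_ring ?_⟩
  ext i j
  have := congr_fun (congr_fun hB (i, p)) (j, q)
  simp only [choi, of_apply] at this
  simp [this, conjMap_apply, Matrix.sum_apply, mul_apply, single_apply, ite_and]

section Kraus

variable {ι : Type*} [Fintype ι] (L : ι → Mat d)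

theorem norm_choi_sum_conjMap_sq :
    ‖choi (∑ a, conjMap (L a))‖ ^ 2 = ∑ a, ∑ b, ‖trace ((L a)ᴴ * L b)‖ ^ 2 := by
  set V : Matrix ι (Fin d × Fin d) ℂ := of fun a P => star (L a P.1 P.2)
  have hchoi : choi (∑ a, conjMap (L a)) = Vᴴ * V := by
    ext P Q
    simp [V, choi, conjMap_apply, Matrix.sum_apply, mul_apply, single_apply, ite_and]
  have hgram : V * Vᴴ = of fun a b => trace ((L a)ᴴ * L b) := by
    ext a b
    simp [V, mul_apply, trace_conjTranspose_mul_eq_sum, Fintype.sum_prod_type, mul_comm]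
  rw [hchoi, frobenius_norm_conjTranspose_mul_self, hgram, frobenius_norm_sq]
  rfl

theorem sum_conjTranspose_mul_self_eq_one (hTP : IsTP (∑ a, conjMap (L a))) :
    ∑ a, (L a)ᴴ * L a = 1 := by
  refine ext_iff_trace_mul_right.mpr fun X => ?_
  rw [Matrix.one_mul, ← hTP X, Finset.sum_mul, trace_sum]
  simp only [LinearMap.coe_sum, Finset.sum_apply, conjMap_apply, trace_sum]
  refine Finset.sum_congr rfl fun a _ => ?_
  rw [trace_mul_comm (L a * X), ← Matrix.mul_assoc]

theorem sum_norm_trace_sq_add_norm_sq_le (h : ∑ a, (L a)ᴴ * L a = 1) :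
    ∑ a, ∑ b, ‖trace ((L a)ᴴ * L b)‖ ^ 2 + ‖∑ a, L a * (L a)ᴴ‖ ^ 2 ≤ d ^ 2 + d := by
  have hN : ‖∑ a, L a * (L a)ᴴ‖ ^ 2 = ∑ a, ∑ b, (trace (L a * (L a)ᴴ * (L b * (L b)ᴴ))).re := by
    simp only [← re_trace_conjTranspose_mul_self, conjTranspose_sum, conjTranspose_mul,
      conjTranspose_conjTranspose, Finset.sum_mul, Finset.mul_sum, trace_sum, Complex.re_sum]
    exact Finset.sum_comm
  have hsq : ∑ a, ‖L a‖ ^ 2 = d := by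
    simp [← re_trace_conjTranspose_mul_self, ← Complex.re_sum, ← trace_sum, h]
  have hquartic : ∑ a, ∑ b, (trace ((L a)ᴴ * L a * ((L b)ᴴ * L b))).re = d := by
    simp [← Complex.re_sum, ← trace_sum, ← Matrix.mul_sum, h]
  calc _ = ∑ a, ∑ b, ((trace (L a * (L a)ᴴ * (L b * (L b)ᴴ))).re + ‖trace ((L a)ᴴ * L b)‖ ^ 2) := by
        simp only [hN, Finset.sum_add_distrib]; ring
    _ ≤ ∑ a, ∑ b, (‖L a‖ ^ 2 * ‖L b‖ ^ 2 + (trace ((L a)ᴴ * L a * ((L b)ᴴ * L b))).re) := by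
        exact Finset.sum_le_sum fun a _ => Finset.sum_le_sum fun b _ =>
          re_trace_add_norm_trace_sq_le (L a) (L b)
    _ = d ^ 2 + d := by
        simp only [Finset.sum_add_distrib, ← Finset.mul_sum, ← Finset.sum_mul, hsq, hquartic]
        ring

end Kraus

theorem norm_choi_sq_add_norm_apply_one_sq_le {E : Mat d →ₗ[ℂ] Mat d} (hCP : IsCP E)
    (hTP : IsTP E) : ‖choi E‖ ^ 2 + ‖E 1‖ ^ 2 ≤ d ^ 2 + d := by
  obtain ⟨L, rfl⟩ := hCP.exists_kraus
  rw [norm_choi_sum_conjMap_sq]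
  simpa [conjMap_apply] using
    sum_norm_trace_sq_add_norm_sq_le L (sum_conjTranspose_mul_self_eq_one L hTP)

theorem Finset.sum_sum_eq_row_add_col_add_erase {ι : Type*} [Fintype ι] [DecidableEq ι]
    (f : ι → ι → ℝ) (i : ι) :
    ∑ k, ∑ l, f k l = ∑ l, f i l + ∑ k ∈ univ.erase i, f k i
      + ∑ k ∈ univ.erase i, ∑ l ∈ univ.erase i, f k l := by
  rw [← Finset.add_sum_erase _ _ (Finset.mem_univ i), add_assoc, ← Finset.sum_add_distrib]
  congr 2 with k
  rw [← Finset.add_sum_erase _ _ (Finset.mem_univ i)]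

lemma Fin.filter_val_eq_zero {N : ℕ} (hN : 0 < N) :
    Finset.univ.filter (fun k : Fin N => (k : ℕ) = 0) = {⟨0, hN⟩} := by
  ext k; simp [Fin.ext_iff]

lemma Fin.filter_val_ne_zero {N : ℕ} (hN : 0 < N) :
    Finset.univ.filter (fun k : Fin N => (k : ℕ) ≠ 0) = Finset.univ.erase ⟨0, hN⟩ := by
  ext k; simp [Fin.ext_iff]

section Liouville

variable {A : Fin (d ^ 2) → Mat d} {E : Mat d →ₗ[ℂ] Mat d}

lemma liou_apply_of_eq_smul_one (hTP : IsTP E) {k : Fin (d ^ 2)} {c : ℂ} (hk : A k = c • 1)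
    (l : Fin (d ^ 2)) : Liou A E k l = trace ((A k)ᴴ * A l) := by
  simp [Liou, hk, hTP (A l)]

lemma sum_norm_liou_sq_col
    (horth : ∀ k l : Fin (d ^ 2), trace ((A k)ᴴ * A l) = if k = l then 1 else 0)
    (hspan : Submodule.span ℂ (Set.range A) = ⊤) (l : Fin (d ^ 2)) :
    ∑ k, ‖Liou A E k l‖ ^ 2 = ‖E (A l)‖ ^ 2 :=
  sum_norm_trace_sq_of_orthonormal horth hspan _

lemma nSq_eq_sum_erase (hd : 0 < d ^ 2) :
    nSq A E = ∑ k ∈ Finset.univ.erase ⟨0, hd⟩, ‖Liou A E k ⟨0, hd⟩‖ ^ 2 := by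
  simp only [nSq, Fin.filter_val_eq_zero hd, Fin.filter_val_ne_zero hd, Finset.sum_singleton]

lemma unitarity_eq_sum_erase (hd : 0 < d ^ 2) :
    unitarity A E = (∑ k ∈ Finset.univ.erase ⟨0, hd⟩, ∑ l ∈ Finset.univ.erase ⟨0, hd⟩,
      ‖Liou A E k l‖ ^ 2) / ((d : ℝ) ^ 2 - 1) := by
  simp only [unitarity, Fin.filter_val_ne_zero hd]

end Liouville

lemma le_sub_one_mul_one_sub_div {d n u s t : ℝ} (hd : 2 ≤ d) (hcol : 1 + n = s / d)
    (htotal : 1 + n + u = t) (hst : t + s ≤ d ^ 2 + d) :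
    n ≤ (d - 1) * (1 - u / (d ^ 2 - 1)) := by
  have hd1 : d - 1 ≠ 0 := by linarith
  rw [eq_div_iff (by positivity)] at hcol
  rw [show (d - 1) * (1 - u / (d ^ 2 - 1)) = d - 1 - u / (d + 1) by
    rw [show d ^ 2 - 1 = (d - 1) * (d + 1) by ring]; field_simp,
    le_sub_comm, div_le_iff₀ (by positivity)]
  nlinarith

/-- For CPTP `E`, `‖𝓔ₙ‖² ≤ (d−1)(1 − u(E))`. -/
theorem statement_10 (d : ℕ) (hd : 2 ≤ d)
    (A : Fin (d ^ 2) → Mat d)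
    (horth : ∀ k l : Fin (d ^ 2), Matrix.trace ((A k)ᴴ * A l) = if k = l then 1 else 0)
    (hspan : Submodule.span ℂ (Set.range A) = ⊤)
    (hA0 : ∀ k : Fin (d ^ 2), (k : ℕ) = 0 → A k = ((Real.sqrt d : ℝ) : ℂ)⁻¹ • 1)
    (E : Mat d →ₗ[ℂ] Mat d) (hCP : IsCP E) (hTP : IsTP E) :
    nSq A E ≤ ((d : ℝ) - 1) * (1 - unitarity A E) := by
  have hd2 : 0 < d ^ 2 := by positivity
  set i0 : Fin (d ^ 2) := ⟨0, hd2⟩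
  have hA : A i0 = ((Real.sqrt d : ℝ) : ℂ)⁻¹ • 1 := hA0 i0 rfl
  have hrow : ∑ l, ‖Liou A E i0 l‖ ^ 2 = 1 := by
    simp [liou_apply_of_eq_smul_one hTP hA, horth, apply_ite]
  have hcol : ∑ k, ‖Liou A E k i0‖ ^ 2 = ‖E 1‖ ^ 2 / d := by
    rw [sum_norm_liou_sq_col horth hspan, hA, map_smul, norm_smul, mul_pow, norm_inv,
      Complex.norm_real, Real.norm_of_nonneg (Real.sqrt_nonneg _), inv_pow,
      Real.sq_sqrt (Nat.cast_nonneg _), inv_mul_eq_div]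
  rw [← Finset.add_sum_erase _ _ (Finset.mem_univ i0), liou_apply_of_eq_smul_one hTP hA, horth,
    if_pos rfl, norm_one, one_pow] at hcol
  have htotal := norm_liou_sq_eq_norm_choi_sq horth hspan E
  rw [frobenius_norm_sq, Finset.sum_sum_eq_row_add_col_add_erase _ i0, hrow] at htotal
  rw [nSq_eq_sum_erase hd2, unitarity_eq_sum_erase hd2]
  exact le_sub_one_mul_one_sub_div (by exact_mod_cast hd) hcol htotal
    (norm_choi_sq_add_norm_apply_one_sq_le hCP hTP)
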